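/- arXiv:1003.4636 — 5 statements merged into one kernel-verified Lean document; each statement's English description precedes it below -/
import Mathlib

section
/- For every integer d ≥ 1 and every norm ‖·‖ on ℂ^{2d}, there exist constants B_d > 0 and b_d > 0 such that: for every vector c = (c_{−d},…,c_{−1},c_1,…,c_d) ∈ ℂ^{2d} with ‖c‖ = 1 and every δ > 0, the Lebesgue measure of the set { x ∈ T : |Σ_{0<|k|≤d} c_k e^{2πikx}| < δ } is strictly less than B_d·δ^{b_d}. -/
/-! Multiplying by `e^{2πidx}` turns the trigonometric polynomial into a polynomial `Q` of degree
at most `n = 2d` evaluated at `z = e^{2πix}`. If the sublevel set `E = {|p| < δ}` has measure `ε`,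
it contains `n + 1` points whose images on the unit circle are pairwise `≳ ε / n` apart, and
Lagrange interpolation at these nodes bounds every coefficient of `Q` by `≲ δ / εⁿ`. Since the
given norm is at most a constant times the largest coefficient, some coefficient is `≳ 1`, whence
`εⁿ ≲ δ`. -/

open MeasureTheory Filter

noncomputable section

abbrev T1 : Type := UnitAddCircle
abbrev T2 : Type := UnitAddCircle × UnitAddCircle

/-- The linear skew-shift `f(x,y) = (x+α, y+x+β)` on the two-torus. -/
def skew (α β : ℝ) : T2 → T2 := fun p => (p.1 + (α : T1), p.2 + p.1 + (β : T1))

/-- Birkhoff sums `ψ_n = ∑_{k<n} ψ ∘ f^k`. -/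
def birkhoff {X : Type*} (f : X → X) (ψ : X → ℝ) (n : ℕ) (p : X) : ℝ :=
  ∑ k ∈ Finset.range n, ψ (f^[k] p)

/-- Fiber average `φ^⊥(x) = ∫_T Φ(x,s) ds`. -/
def fiberAvg (Φ : T2 → ℝ) : T1 → ℝ := fun x => ∫ s : T1, Φ (x, s)

/-- Fiber projection `φ(x,y) = Φ(x,y) - ∫_T Φ(x,s) ds`. -/
def fiberProj (Φ : T2 → ℝ) : T2 → ℝ := fun p => Φ p - ∫ s : T1, Φ (p.1, s)

/-- `ψ` is a measurable coboundary for `f`: `ψ = u∘f - u` a.e. for some measurable `u`. -/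
def MeasCobound (f : T2 → T2) (ψ : T2 → ℝ) : Prop :=
  ∃ u : T2 → ℝ, Measurable u ∧ ∀ᵐ p : T2, ψ p = u (f p) - u p

/-- `g` is (real-valued and) a trigonometric polynomial of degree at most `d` on the circle. -/
def IsTrigPolyDeg (d : ℕ) (g : T1 → ℝ) : Prop :=
  ∃ c : ℤ → ℂ, ∀ y : T1, (g y : ℂ) = ∑ k ∈ Finset.Icc (-(d : ℤ)) d, c k * fourier k y

/-- The class `P_d`: continuous functions, trigonometric polynomials of degree `≤ d` in `y`. -/
def InPd (d : ℕ) (Φ : T2 → ℝ) : Prop :=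
  Continuous Φ ∧ ∀ x : T1, IsTrigPolyDeg d fun y => Φ (x, y)

/-- The class `R` of roof functions: `Φ ∈ P_d` for some `d ≥ 1` and `φ^⊥` is a
trigonometric polynomial. -/
def InR (Φ : T2 → ℝ) : Prop :=
  (∃ d : ℕ, 1 ≤ d ∧ InPd d Φ) ∧ ∃ d' : ℕ, IsTrigPolyDeg d' (fiberAvg Φ)

/-- The hitting number `n_t(p) = max { n : Φ_n(p) < t }`. -/
def hitting (f : T2 → T2) (Φ : T2 → ℝ) (t : ℝ) (p : T2) : ℕ :=
  sSup {n : ℕ | birkhoff f Φ n p < t}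

open Polynomial Finset Real

theorem Seminorm.le_sum_apply_single_mul_norm {𝕜 ι : Type*} [NormedField 𝕜] [Fintype ι]
    [DecidableEq ι] (p : Seminorm 𝕜 (ι → 𝕜)) (c : ι → 𝕜) :
    p c ≤ (∑ i, p (Pi.single i 1)) * ‖c‖ :=
  calc p c = p (∑ i, c i • Pi.single i 1) := by
        simp_rw [← Pi.single_smul, smul_eq_mul, mul_one, univ_sum_single]
    _ ≤ ∑ i, p (c i • Pi.single i 1) :=
        le_sum_of_subadditive p (map_zero p).le (map_add_le_add p) _ _
    _ = ∑ i, ‖c i‖ * p (Pi.single i 1) := by simp_rw [map_smul_eq_mul]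
    _ ≤ ∑ i, ‖c‖ * p (Pi.single i 1) := by gcongr; exact norm_le_pi_norm c _
    _ = (∑ i, p (Pi.single i 1)) * ‖c‖ := by rw [← mul_sum, mul_comm]

theorem UnitAddCircle.four_mul_norm_le_norm_toCircle_sub_one (t : UnitAddCircle) :
    4 * ‖t‖ ≤ ‖(AddCircle.toCircle t : ℂ) - 1‖ := by
  induction t using QuotientAddGroup.induction_on with | H r => ?_
  -- `‖e^{2πis} - 1‖ = 2 |sin πs|` and Jordan's inequality, for the representative `|s| ≤ 1/2`
  set s := r - round r
  have hs : |π * s| ≤ π / 2 := by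
    rw [abs_mul, abs_of_pos pi_pos]
    nlinarith [abs_sub_round r, pi_pos]
  have hsin := mul_abs_le_abs_sin hs
  rw [abs_mul, abs_of_pos pi_pos, ← mul_assoc, div_mul_cancel₀ _ pi_ne_zero] at hsin
  have hrs : (s : UnitAddCircle) = r := by simp [s]
  rw [UnitAddCircle.norm_eq, ← hrs, AddCircle.toCircle_apply_mk, Circle.coe_exp,
    mul_comm _ Complex.I, Complex.norm_exp_I_mul_ofReal_sub_one, norm_mul, Real.norm_eq_abs,
    abs_two, Real.norm_eq_abs, show 2 * π / 1 * s / 2 = π * s by ring]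
  change 4 * |s| ≤ _
  linarith

theorem UnitAddCircle.four_mul_dist_le_norm_toCircle_sub (x y : UnitAddCircle) :
    4 * dist x y ≤ ‖(AddCircle.toCircle x : ℂ) - AddCircle.toCircle y‖ := by
  have hxy : (AddCircle.toCircle x : ℂ) - AddCircle.toCircle y
      = AddCircle.toCircle y * (AddCircle.toCircle (x - y) - 1) := by
    rw [← sub_add_cancel x y, AddCircle.toCircle_add, add_sub_cancel_right, Circle.coe_mul]
    ring
  rw [hxy, norm_mul, Circle.norm_coe, one_mul, dist_eq_norm]
  exact four_mul_norm_le_norm_toCircle_sub_one _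

theorem AddCircle.exists_pairwise_le_dist_of_lt_measureReal {T : ℝ} [Fact (0 < T)] (n : ℕ)
    {E : Set (AddCircle T)} {η : ℝ} (hη : 0 ≤ η) (hE : n * (2 * η) < volume.real E) :
    ∃ x : Fin (n + 1) → AddCircle T, (∀ i, x i ∈ E) ∧ Pairwise fun i j => η ≤ dist (x i) (x j) := by
  induction n generalizing E with
  | zero =>
    obtain ⟨x₀, hx₀⟩ := nonempty_of_measureReal_ne_zero (by simp at hE; exact hE.ne')
    exact ⟨fun _ => x₀, fun _ => hx₀, fun i j hij => (hij (Fin.subsingleton_one.elim i j)).elim⟩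
  | succ n ih =>
    obtain ⟨x₀, hx₀⟩ := nonempty_of_measureReal_ne_zero (lt_of_le_of_lt (by positivity) hE).ne'
    have hball : volume.real (Metric.closedBall x₀ η) ≤ 2 * η := by
      rw [measureReal_def, AddCircle.volume_closedBall T, ENNReal.toReal_ofReal']
      exact max_le (min_le_right _ _) (by positivity)
    have hsplit : volume.real E ≤ volume.real (E \ Metric.closedBall x₀ η) + 2 * η :=
      calc volume.real E ≤ volume.real ((E \ Metric.closedBall x₀ η) ∪ Metric.closedBall x₀ η) :=
            measureReal_mono (by rw [Set.sdiff_union_self]; exact Set.subset_union_left)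
        _ ≤ _ := (measureReal_union_le _ _).trans (by linarith)
    obtain ⟨x, hxE, hx⟩ := ih (E := E \ Metric.closedBall x₀ η) (by push_cast at hE; linarith)
    have hfar : ∀ i, η ≤ dist (x i) x₀ := fun i => (not_le.mp (hxE i).2).le
    refine ⟨Fin.cons x₀ x, Fin.cases hx₀ fun i => (hxE i).1, pairwise_fin_succ_iff.mpr ⟨?_, ?_, ?_⟩⟩
    · simpa using hfar
    · simpa [dist_comm] using hfar
    · simpa using hx

namespace Lagrange

theorem basis_eq_C_nodalWeight_mul_nodal_erase {F ι : Type*} [Field F] [DecidableEq ι]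
    (s : Finset ι) (v : ι → F) (i : ι) :
    Lagrange.basis s v i = C (nodalWeight s v i) * nodal (s.erase i) v := by
  simp only [Lagrange.basis, basisDivisor, prod_mul_distrib, ← map_prod, nodalWeight, nodal]

theorem norm_coeff_nodal_le {ι : Type*} (s : Finset ι) {v : ι → ℂ}
    (hv : ∀ j ∈ s, ‖v j‖ ≤ 1) (k : ℕ) : ‖(nodal s v).coeff k‖ ≤ 2 ^ #s := by
  have hroots : ∀ z ∈ ((nodal s v).map (RingHom.id ℂ)).roots, ‖z‖ ≤ 1 := by
    intro z hz
    rw [Polynomial.map_id, mem_roots nodal_ne_zero, IsRoot, eval_nodal, prod_eq_zero_iff] at hz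
    obtain ⟨j, hj, hzj⟩ := hz
    rw [sub_eq_zero.mp hzj]
    exact hv j hj
  have h := coeff_le_of_roots_le k nodal_monic (IsAlgClosed.splits _) hroots
  rw [Polynomial.map_id, one_pow, one_mul, natDegree_nodal] at h
  exact h.trans (by exact_mod_cast Nat.choose_le_two_pow _ _)

variable {ι : Type*} [DecidableEq ι] {s : Finset ι} {v : ι → ℂ} {r : ℝ}

theorem norm_coeff_basis_le (hr : 0 < r) (hv : ∀ j ∈ s, ‖v j‖ ≤ 1)
    (hsep : ∀ i ∈ s, ∀ j ∈ s, i ≠ j → r ≤ ‖v i - v j‖) {i : ι} (hi : i ∈ s) (k : ℕ) :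
    ‖(Lagrange.basis s v i).coeff k‖ ≤ (2 / r) ^ (#s - 1) := by
  rw [basis_eq_C_nodalWeight_mul_nodal_erase, coeff_C_mul, norm_mul, div_eq_mul_inv, mul_pow,
    mul_comm, ← card_erase_of_mem hi]
  gcongr
  · exact norm_coeff_nodal_le _ (fun j hj => hv j (mem_of_mem_erase hj)) k
  · rw [nodalWeight, norm_prod, ← prod_const]
    refine prod_le_prod (fun _ _ => norm_nonneg _) fun j hj => ?_
    rw [norm_inv]
    exact inv_anti₀ hr (hsep i hi j (mem_of_mem_erase hj) (ne_of_mem_erase hj).symm)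

theorem norm_coeff_le_of_norm_eval_le (hr : 0 < r) (hv : ∀ j ∈ s, ‖v j‖ ≤ 1)
    (hsep : ∀ i ∈ s, ∀ j ∈ s, i ≠ j → r ≤ ‖v i - v j‖) {Q : ℂ[X]} (hQ : Q.degree < #s) {δ : ℝ}
    (hQv : ∀ i ∈ s, ‖Q.eval (v i)‖ ≤ δ) (k : ℕ) :
    ‖Q.coeff k‖ ≤ #s * δ * (2 / r) ^ (#s - 1) := by
  have hinj : Set.InjOn v s := fun i hi j hj hij => by
    by_contra hne
    have := hsep i hi j hj hne
    rw [hij, sub_self, norm_zero] at this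
    linarith
  rw [eq_interpolate hinj hQ, interpolate_apply, finsetSum_coeff, mul_assoc, ← nsmul_eq_mul,
    ← sum_const]
  refine (norm_sum_le _ _).trans (sum_le_sum fun i hi => ?_)
  rw [coeff_C_mul, norm_mul]
  exact mul_le_mul (hQv i hi) (norm_coeff_basis_le hr hv hsep hi k) (norm_nonneg _)
    ((norm_nonneg _).trans (hQv i hi))

end Lagrange

theorem Polynomial.measureReal_pow_mul_norm_coeff_le {n : ℕ} {Q : ℂ[X]} (hQ : Q.degree ≤ n)
    {E : Set UnitAddCircle} (hE : 0 < volume.real E) {δ : ℝ}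
    (hQE : ∀ x ∈ E, ‖Q.eval (AddCircle.toCircle x : ℂ)‖ ≤ δ) (k : ℕ) :
    volume.real E ^ n * ‖Q.coeff k‖ ≤ (n + 1) * (2 * (n + 1)) ^ n * δ := by
  set ε := volume.real E
  obtain ⟨x, hxE, hx⟩ := AddCircle.exists_pairwise_le_dist_of_lt_measureReal n
    (η := ε / (4 * (n + 1))) (by positivity) (by
      rw [show n * (2 * (ε / (4 * (n + 1)))) = ε * (n / (2 * (n + 1))) by field_simp; ring]
      exact mul_lt_of_lt_one_right hE ((div_lt_one (by positivity)).mpr (by linarith)))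
  have hsep : ∀ i ∈ univ, ∀ j ∈ univ, i ≠ j →
      ε / (n + 1) ≤ ‖(AddCircle.toCircle (x i) : ℂ) - AddCircle.toCircle (x j)‖ :=
    fun i _ j _ hij => by
      have hchord := UnitAddCircle.four_mul_dist_le_norm_toCircle_sub (x i) (x j)
      have hη : ε / (4 * (n + 1)) ≤ dist (x i) (x j) := hx hij
      rw [div_le_iff₀ (by positivity)] at hη ⊢
      calc ε ≤ dist (x i) (x j) * (4 * (n + 1)) := hη
        _ = 4 * dist (x i) (x j) * (n + 1) := by ring
        _ ≤ _ := mul_le_mul_of_nonneg_right hchord (by positivity)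
  have h := Lagrange.norm_coeff_le_of_norm_eval_le (by positivity)
    (fun j _ => (Circle.norm_coe _).le) hsep
    (by rw [card_univ, Fintype.card_fin]; exact hQ.trans_lt (by exact_mod_cast n.lt_succ_self))
    (fun i _ => hQE _ (hxE i)) k
  rw [card_univ, Fintype.card_fin, Nat.add_sub_cancel] at h
  calc ε ^ n * ‖Q.coeff k‖ ≤ ε ^ n * ((n + 1 : ℕ) * δ * (2 / (ε / (n + 1))) ^ n) := by gcongr
    _ = (n + 1) * (2 * (n + 1)) ^ n * δ := by
        rw [div_div_eq_mul_div, div_pow]; field_simp; push_cast; ring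

section TrigSum

variable (d : ℕ)

/-- `c (Sum.inl i)` is the coefficient of `e^{2πi(i+1)x}` and `c (Sum.inr i)` that of
`e^{-2πi(i+1)x}`. -/
def trigSum (c : Fin d ⊕ Fin d → ℂ) (x : UnitAddCircle) : ℂ :=
  ∑ i : Fin d, (c (Sum.inl i) * fourier (((i : ℕ) : ℤ) + 1) x
    + c (Sum.inr i) * fourier (-(((i : ℕ) : ℤ) + 1)) x)

/-- The frequency `±(i + 1)` of `s`, shifted by `d` so that it is a natural number. -/
def shiftedExponent : Fin d ⊕ Fin d → ℕ :=
  Sum.elim (fun i => d + 1 + i) (fun i => d - 1 - i)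

def shiftedPoly (c : Fin d ⊕ Fin d → ℂ) : ℂ[X] :=
  ∑ s, monomial (shiftedExponent d s) (c s)

theorem shiftedExponent_injective : Function.Injective (shiftedExponent d) := by
  rintro (⟨i, hi⟩ | ⟨i, hi⟩) (⟨j, hj⟩ | ⟨j, hj⟩) h <;>
    simp only [shiftedExponent, Sum.elim_inl, Sum.elim_inr] at h <;> simp <;> omega

theorem shiftedExponent_le (s : Fin d ⊕ Fin d) : shiftedExponent d s ≤ 2 * d := by
  rcases s with ⟨i, hi⟩ | ⟨i, hi⟩ <;> simp only [shiftedExponent, Sum.elim_inl, Sum.elim_inr] <;>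
    omega

variable {d}

theorem coeff_shiftedPoly (c : Fin d ⊕ Fin d → ℂ) (s : Fin d ⊕ Fin d) :
    (shiftedPoly d c).coeff (shiftedExponent d s) = c s := by
  rw [shiftedPoly, finsetSum_coeff, sum_eq_single s]
  · exact coeff_monomial_same _ _
  · exact fun s' _ hs' => coeff_monomial_of_ne _ ((shiftedExponent_injective d).ne hs'.symm)
  · exact fun hs => (hs (mem_univ s)).elim

theorem degree_shiftedPoly_le (c : Fin d ⊕ Fin d → ℂ) :
    (shiftedPoly d c).degree ≤ (2 * d : ℕ) :=
  (degree_sum_le _ _).trans <| Finset.sup_le fun s _ =>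
    (degree_monomial_le _ _).trans (by exact_mod_cast shiftedExponent_le d s)

theorem eval_toCircle_shiftedPoly (c : Fin d ⊕ Fin d → ℂ) (x : UnitAddCircle) :
    (shiftedPoly d c).eval (AddCircle.toCircle x : ℂ) = fourier d x * trigSum d c x := by
  have hpow : ∀ m : ℕ, (AddCircle.toCircle x : ℂ) ^ m = fourier m x := fun m => by
    rw [fourier_apply, natCast_zsmul, AddCircle.toCircle_nsmul, Circle.coe_pow]
  simp only [shiftedPoly, eval_finsetSum, Fintype.sum_sum_type, shiftedExponent, Sum.elim_inl,
    Sum.elim_inr, trigSum, mul_sum, ← sum_add_distrib]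
  refine sum_congr rfl fun i _ => ?_
  have hpos : ((d + 1 + i : ℕ) : ℤ) = d + (i + 1) := by push_cast; ring
  have hneg : ((d - 1 - i : ℕ) : ℤ) = d + -(i + 1) := by omega
  rw [eval_add, eval_monomial, eval_monomial, hpow, hpow, hpos, hneg, fourier_add (m := (d : ℤ)),
    fourier_add (m := (d : ℤ))]
  ring

theorem measureReal_pow_mul_norm_le_of_norm_trigSum_le {c : Fin d ⊕ Fin d → ℂ}
    {E : Set UnitAddCircle} (hE : 0 < volume.real E) {δ : ℝ}
    (hcE : ∀ x ∈ E, ‖trigSum d c x‖ ≤ δ) :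
    volume.real E ^ (2 * d) * ‖c‖ ≤ (2 * d + 1) * (2 * (2 * d + 1)) ^ (2 * d) * δ := by
  have hcoeff (s : Fin d ⊕ Fin d) :
      volume.real E ^ (2 * d) * ‖c s‖ ≤ (2 * d + 1) * (2 * (2 * d + 1)) ^ (2 * d) * δ := by
    have h := (shiftedPoly d c).measureReal_pow_mul_norm_coeff_le (degree_shiftedPoly_le c) hE
      (fun x hx => by
        rw [eval_toCircle_shiftedPoly, norm_mul, fourier_apply, Circle.norm_coe, one_mul]
        exact hcE x hx)
      (shiftedExponent d s)
    rw [coeff_shiftedPoly] at h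
    exact_mod_cast h
  obtain ⟨x, hx⟩ := nonempty_of_measureReal_ne_zero hE.ne'
  have hδ : 0 ≤ δ := (norm_nonneg _).trans (hcE x hx)
  have hεn : 0 < volume.real E ^ (2 * d) := by positivity
  rw [mul_comm, ← le_div_iff₀ hεn]
  refine (pi_norm_le_iff_of_nonneg (by positivity)).2 fun s => ?_
  rw [le_div_iff₀ hεn, mul_comm]
  exact hcoeff s

end TrigSum

theorem lt_add_one_mul_rpow_inv_of_pow_le {ε K δ : ℝ} {n : ℕ} (hn : n ≠ 0) (hε : 0 ≤ ε)
    (hK : 0 ≤ K) (hδ : 0 < δ) (h : ε ^ n ≤ K * δ) :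
    ε < (K ^ (n : ℝ)⁻¹ + 1) * δ ^ (n : ℝ)⁻¹ :=
  calc ε = (ε ^ n) ^ (n : ℝ)⁻¹ := (pow_rpow_inv_natCast hε hn).symm
    _ ≤ (K * δ) ^ (n : ℝ)⁻¹ := by gcongr
    _ = K ^ (n : ℝ)⁻¹ * δ ^ (n : ℝ)⁻¹ := mul_rpow hK hδ.le
    _ < (K ^ (n : ℝ)⁻¹ + 1) * δ ^ (n : ℝ)⁻¹ :=
        mul_lt_mul_of_pos_right (lt_add_one _) (rpow_pos_of_pos hδ _)

theorem stmt3_general (d : ℕ) (hd : 1 ≤ d) (nrm : ((Fin d ⊕ Fin d) → ℂ) → ℝ)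
    (hsmul : ∀ (a : ℂ) (c), nrm (a • c) = ‖a‖ * nrm c)
    (htri : ∀ c c', nrm (c + c') ≤ nrm c + nrm c') :
    ∃ B > (0 : ℝ), ∃ b > (0 : ℝ), ∀ c : (Fin d ⊕ Fin d) → ℂ, nrm c = 1 → ∀ δ > (0 : ℝ),
      (volume {x : T1 |
          ‖∑ i : Fin d,
              (c (Sum.inl i) * fourier (((i : ℕ) : ℤ) + 1) x
                + c (Sum.inr i) * fourier (-(((i : ℕ) : ℤ) + 1)) x)‖ < δ}).toReal
        < B * δ ^ b := by
  let p : Seminorm ℂ (Fin d ⊕ Fin d → ℂ) := .of nrm htri hsmul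
  set M := ∑ s, p (Pi.single s 1)
  set K := M * ((2 * d + 1) * (2 * (2 * d + 1)) ^ (2 * d))
  have hK : 0 ≤ K := by positivity
  refine ⟨K ^ ((2 * d : ℕ) : ℝ)⁻¹ + 1, by positivity, ((2 * d : ℕ) : ℝ)⁻¹, by positivity,
    fun c hc δ hδ => ?_⟩
  set E := {x : UnitAddCircle | ‖trigSum d c x‖ < δ}
  change volume.real E < _
  obtain hE | hE := (measureReal_nonneg (s := E)).eq_or_lt
  · rw [← hE]; positivity
  refine lt_add_one_mul_rpow_inv_of_pow_le (by omega) hE.le hK hδ ?_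
  calc volume.real E ^ (2 * d) = volume.real E ^ (2 * d) * p c := by
        rw [show p c = 1 from hc, mul_one]
    _ ≤ volume.real E ^ (2 * d) * (M * ‖c‖) := by gcongr; exact p.le_sum_apply_single_mul_norm c
    _ = M * (volume.real E ^ (2 * d) * ‖c‖) := by ring
    _ ≤ M * ((2 * d + 1) * (2 * (2 * d + 1)) ^ (2 * d) * δ) :=
        mul_le_mul_of_nonneg_left
          (measureReal_pow_mul_norm_le_of_norm_trigSum_le hE fun _ hx => le_of_lt hx)
          (by positivity)
    _ = K * δ := by ring

/-- Lemma on trigonometric polynomials without constant term.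
For every `d ≥ 1` and every norm on `ℂ^{2d}` (coefficients indexed by
`k ∈ {1,…,d} ⊕ {-1,…,-d}`), there are `B_d > 0` and `b_d > 0` such that for every
unit-norm coefficient vector `c` and every `δ > 0`, the measure of
`{x : |∑_{0<|k|≤d} c_k e^{2πikx}| < δ}` is `< B_d δ^{b_d}`. -/
theorem stmt3 (d : ℕ) (hd : 1 ≤ d) (nrm : ((Fin d ⊕ Fin d) → ℂ) → ℝ)
    (hzero : ∀ c, nrm c = 0 ↔ c = 0)
    (hsmul : ∀ (a : ℂ) (c), nrm (a • c) = ‖a‖ * nrm c)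
    (htri : ∀ c c', nrm (c + c') ≤ nrm c + nrm c') :
    ∃ B > (0 : ℝ), ∃ b > (0 : ℝ), ∀ c : (Fin d ⊕ Fin d) → ℂ, nrm c = 1 → ∀ δ > (0 : ℝ),
      (volume {x : T1 |
          ‖∑ i : Fin d,
              (c (Sum.inl i) * fourier (((i : ℕ) : ℤ) + 1) x
                + c (Sum.inr i) * fourier (-(((i : ℕ) : ℤ) + 1)) x)‖ < δ}).toReal
        < B * δ ^ b :=
  stmt3_general d hd nrm hsmul htri
end
end

section
/- Let f be a linear skew-shift of T² and let Φ : T² → ℝ be continuous with minimum Φ̲ > 0 and maximum Φ̄. Fix t > 0, x ∈ T and a closed arc [a,b] ⊆ T, and set I = {x}×[a,b], n̲_t(I) := min_{y∈[a,b]} n_t(x,y), n̄_t(I) := max_{y∈[a,b]} n_t(x,y), and ΔΦ_n(I) := max_{y∈[a,b]} Φ_n(x,y) − min_{y∈[a,b]} Φ_n(x,y). Then ΔΦ_{n̲_t(I)}(I)/Φ̄ − Φ̄/Φ̲ ≤ n̄_t(I) − n̲_t(I) ≤ ΔΦ_{n̲_t(I)}(I)/Φ̲ + Φ̄/Φ̲.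 -/
open MeasureTheory Filter

noncomputable section

/-- Minimum of the hitting number over the arc `{x} × [a,b]`. -/
def nlowArc (f : T2 → T2) (Φ : T2 → ℝ) (t : ℝ) (x : T1) (a b : ℝ) : ℕ :=
  sInf ((fun y : ℝ => hitting f Φ t (x, (y : T1))) '' Set.Icc a b)

/-- Maximum of the hitting number over the arc `{x} × [a,b]`. -/
def nhighArc (f : T2 → T2) (Φ : T2 → ℝ) (t : ℝ) (x : T1) (a b : ℝ) : ℕ :=
  sSup ((fun y : ℝ => hitting f Φ t (x, (y : T1))) '' Set.Icc a b)

/-- The stretch `ΔΦ_n(I) = max_{y∈[a,b]} Φ_n(x,y) − min_{y∈[a,b]} Φ_n(x,y)`. -/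
def stretchArc (f : T2 → T2) (Φ : T2 → ℝ) (n : ℕ) (x : T1) (a b : ℝ) : ℝ :=
  sSup ((fun y : ℝ => birkhoff f Φ n (x, (y : T1))) '' Set.Icc a b)
    - sInf ((fun y : ℝ => birkhoff f Φ n (x, (y : T1))) '' Set.Icc a b)

/-!
Since `Φ > 0`, `n ↦ Φ_n(p)` is increasing, so `Φ_n(p) < t ↔ n ≤ n_t(p)`, and it grows by
between `Φ̲` and `Φ̄` per step. At level `n̲` every point of the arc is still below `t`, while at
level `n̄ + 1` every point has reached `t`; hence the stretch at level `n̲` is at most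
`(n̄ + 1 − n̲) Φ̄`. Conversely, the point where `n̄` is attained climbs by at least `(n̄ − n̲) Φ̲`
between levels `n̲` and `n̄` without reaching `t`, while at the point where `n̲` is attained
`Φ_{n̲}` is within `Φ̄` of `t`; this bounds `(n̄ − n̲) Φ̲` by the stretch plus `Φ̄`.
-/

open Set

section Birkhoff

variable {X : Type*} (f : X → X) (Φ : X → ℝ)

lemma birkhoff_sub_birkhoff {m n : ℕ} (h : m ≤ n) (p : X) :
    birkhoff f Φ n p - birkhoff f Φ m p = ∑ k ∈ Finset.Ico m n, Φ (f^[k] p) :=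
  (Finset.sum_Ico_eq_sub _ h).symm

lemma birkhoff_add_mul_le {lo : ℝ} (hΦ : ∀ p, lo ≤ Φ p) {m n : ℕ} (h : m ≤ n) (p : X) :
    birkhoff f Φ m p + ((n : ℝ) - m) * lo ≤ birkhoff f Φ n p := by
  have hsum := Finset.card_nsmul_le_sum (Finset.Ico m n) (fun k => Φ (f^[k] p)) lo
    fun k _ => hΦ _
  rw [nsmul_eq_mul, Nat.card_Ico, Nat.cast_sub h, ← birkhoff_sub_birkhoff f Φ h] at hsum
  linarith

lemma birkhoff_le_add_mul {hi : ℝ} (hΦ : ∀ p, Φ p ≤ hi) {m n : ℕ} (h : m ≤ n) (p : X) :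
    birkhoff f Φ n p ≤ birkhoff f Φ m p + ((n : ℝ) - m) * hi := by
  have hsum := Finset.sum_le_card_nsmul (Finset.Ico m n) (fun k => Φ (f^[k] p)) hi
    fun k _ => hΦ _
  rw [nsmul_eq_mul, Nat.card_Ico, Nat.cast_sub h, ← birkhoff_sub_birkhoff f Φ h] at hsum
  linarith

lemma birkhoff_nonneg (hΦ : ∀ p, 0 ≤ Φ p) (n : ℕ) (p : X) : 0 ≤ birkhoff f Φ n p :=
  Finset.sum_nonneg fun _ _ => hΦ _

lemma birkhoff_mono (hΦ : ∀ p, 0 ≤ Φ p) (p : X) : Monotone fun n => birkhoff f Φ n p :=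
  fun _ _ h => Finset.sum_le_sum_of_subset_of_nonneg (Finset.range_mono h) fun _ _ _ => hΦ _

end Birkhoff

section Hitting

variable (f : T2 → T2) {Φ : T2 → ℝ} {lo : ℝ} (hlo : 0 < lo) (hΦ : ∀ p, lo ≤ Φ p) (t : ℝ)
include hlo hΦ

lemma ceil_mem_upperBounds_setOf_birkhoff_lt (p : T2) :
    ⌈t / lo⌉₊ ∈ upperBounds {n : ℕ | birkhoff f Φ n p < t} := by
  intro n hn
  have h := birkhoff_add_mul_le f Φ hΦ (Nat.zero_le n) p
  simp only [birkhoff, Finset.range_zero, Finset.sum_empty, Nat.cast_zero, sub_zero,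
    zero_add] at h
  exact (Nat.lt_ceil.mpr ((lt_div_iff₀ hlo).mpr (h.trans_lt hn))).le

lemma hitting_le_ceil (p : T2) : hitting f Φ t p ≤ ⌈t / lo⌉₊ :=
  csSup_le' (ceil_mem_upperBounds_setOf_birkhoff_lt f hlo hΦ t p)

lemma birkhoff_lt_iff_le_hitting (ht : 0 < t) (n : ℕ) (p : T2) :
    birkhoff f Φ n p < t ↔ n ≤ hitting f Φ t p := by
  have hbdd : BddAbove {n : ℕ | birkhoff f Φ n p < t} :=
    ⟨_, ceil_mem_upperBounds_setOf_birkhoff_lt f hlo hΦ t p⟩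
  refine ⟨fun hn => le_csSup hbdd hn, fun hn => ?_⟩
  have hzero : birkhoff f Φ 0 p < t := by simpa [birkhoff] using ht
  have hmem : birkhoff f Φ (hitting f Φ t p) p < t := Nat.sSup_mem ⟨0, hzero⟩ hbdd
  exact (birkhoff_mono f Φ (fun q => hlo.le.trans (hΦ q)) p hn).trans_lt hmem

lemma le_birkhoff_iff_hitting_lt (ht : 0 < t) (n : ℕ) (p : T2) :
    t ≤ birkhoff f Φ n p ↔ hitting f Φ t p < n := by
  rw [← not_lt, birkhoff_lt_iff_le_hitting f hlo hΦ t ht, not_le]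

end Hitting

section Arc

variable (f : T2 → T2) (Φ : T2 → ℝ) (t : ℝ) (x : T1) {a b : ℝ}

lemma nlowArc_le_hitting {y : ℝ} (hy : y ∈ Icc a b) :
    nlowArc f Φ t x a b ≤ hitting f Φ t (x, (y : T1)) :=
  Nat.sInf_le ⟨y, hy, rfl⟩

lemma exists_hitting_eq_nlowArc (hab : a ≤ b) :
    ∃ y ∈ Icc a b, hitting f Φ t (x, (y : T1)) = nlowArc f Φ t x a b :=
  Nat.sInf_mem ((nonempty_Icc.mpr hab).image _)

variable {Φ} {lo : ℝ} (hlo : 0 < lo) (hΦ : ∀ p, lo ≤ Φ p)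
include hlo hΦ

lemma bddAbove_hitting_image_Icc :
    BddAbove ((fun y : ℝ => hitting f Φ t (x, (y : T1))) '' Icc a b) :=
  ⟨⌈t / lo⌉₊, by rintro _ ⟨y, -, rfl⟩; exact hitting_le_ceil f hlo hΦ t _⟩

lemma hitting_le_nhighArc {y : ℝ} (hy : y ∈ Icc a b) :
    hitting f Φ t (x, (y : T1)) ≤ nhighArc f Φ t x a b :=
  le_csSup (bddAbove_hitting_image_Icc f t x hlo hΦ) ⟨y, hy, rfl⟩

lemma exists_hitting_eq_nhighArc (hab : a ≤ b) :
    ∃ y ∈ Icc a b, hitting f Φ t (x, (y : T1)) = nhighArc f Φ t x a b :=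
  Nat.sSup_mem ((nonempty_Icc.mpr hab).image _) (bddAbove_hitting_image_Icc f t x hlo hΦ)

lemma birkhoff_nlowArc_lt (ht : 0 < t) {y : ℝ} (hy : y ∈ Icc a b) :
    birkhoff f Φ (nlowArc f Φ t x a b) (x, (y : T1)) < t :=
  (birkhoff_lt_iff_le_hitting f hlo hΦ t ht _ _).mpr (nlowArc_le_hitting f Φ t x hy)

lemma stretchArc_nlowArc_le {hi : ℝ} (hΦhi : ∀ p, Φ p ≤ hi) (ht : 0 < t) (hab : a ≤ b) :
    stretchArc f Φ (nlowArc f Φ t x a b) x a b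
      ≤ ((nhighArc f Φ t x a b : ℝ) + 1 - nlowArc f Φ t x a b) * hi := by
  set n₁ := nlowArc f Φ t x a b
  set n₂ := nhighArc f Φ t x a b
  have hne := (nonempty_Icc.mpr hab).image fun y : ℝ => birkhoff f Φ n₁ (x, (y : T1))
  have hsup : sSup ((fun y : ℝ => birkhoff f Φ n₁ (x, (y : T1))) '' Icc a b) ≤ t :=
    csSup_le hne <| by
      rintro _ ⟨y, hy, rfl⟩; exact (birkhoff_nlowArc_lt f t x hlo hΦ ht hy).le
  have hinf : t - ((n₂ : ℝ) + 1 - n₁) * hi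
      ≤ sInf ((fun y : ℝ => birkhoff f Φ n₁ (x, (y : T1))) '' Icc a b) :=
    le_csInf hne <| by
      rintro _ ⟨y, hy, rfl⟩
      have hn₁ := nlowArc_le_hitting f Φ t x hy
      have hn₂ := hitting_le_nhighArc f t x hlo hΦ hy
      have hreach : t ≤ birkhoff f Φ (n₂ + 1) (x, (y : T1)) :=
        (le_birkhoff_iff_hitting_lt f hlo hΦ t ht _ _).mpr (Nat.lt_succ_of_le hn₂)
      have hstep := birkhoff_le_add_mul f Φ hΦhi (show n₁ ≤ n₂ + 1 by omega) (x, (y : T1))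
      push_cast at hstep
      linarith
  unfold stretchArc
  linarith

lemma nhighArc_sub_nlowArc_mul_le {hi : ℝ} (hΦhi : ∀ p, Φ p ≤ hi) (ht : 0 < t)
    (hab : a ≤ b) :
    ((nhighArc f Φ t x a b : ℝ) - nlowArc f Φ t x a b) * lo
      ≤ stretchArc f Φ (nlowArc f Φ t x a b) x a b + hi := by
  set n₁ := nlowArc f Φ t x a b
  set n₂ := nhighArc f Φ t x a b
  set S := (fun y : ℝ => birkhoff f Φ n₁ (x, (y : T1))) '' Icc a b
  obtain ⟨y₁, hy₁, hn₁⟩ := exists_hitting_eq_nlowArc f Φ t x hab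
  obtain ⟨y₂, hy₂, hn₂⟩ := exists_hitting_eq_nhighArc f t x hlo hΦ hab
  have hbddAbove : BddAbove S :=
    ⟨t, by rintro _ ⟨y, hy, rfl⟩; exact (birkhoff_nlowArc_lt f t x hlo hΦ ht hy).le⟩
  have hbddBelow : BddBelow S :=
    ⟨0, by
      rintro _ ⟨y, -, rfl⟩
      exact birkhoff_nonneg f Φ (fun q => hlo.le.trans (hΦ q)) _ _⟩
  have hclimb := birkhoff_add_mul_le f Φ hΦ (hn₂ ▸ nlowArc_le_hitting f Φ t x hy₂) (x, (y₂ : T1))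
  have hbelow : birkhoff f Φ n₂ (x, (y₂ : T1)) < t :=
    (birkhoff_lt_iff_le_hitting f hlo hΦ t ht _ _).mpr hn₂.ge
  have hreach : t ≤ birkhoff f Φ (n₁ + 1) (x, (y₁ : T1)) :=
    (le_birkhoff_iff_hitting_lt f hlo hΦ t ht _ _).mpr (hn₁ ▸ Nat.lt_succ_self _)
  have hstep := birkhoff_le_add_mul f Φ hΦhi (Nat.le_succ n₁) (x, (y₁ : T1))
  push_cast at hstep
  have hinf : sInf S ≤ birkhoff f Φ n₁ (x, (y₂ : T1)) := csInf_le hbddBelow ⟨y₂, hy₂, rfl⟩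
  have hsup : birkhoff f Φ n₁ (x, (y₁ : T1)) ≤ sSup S := le_csSup hbddAbove ⟨y₁, hy₁, rfl⟩
  unfold stretchArc
  linarith

end Arc

theorem stmt5_general (α β : ℝ) (Φ : T2 → ℝ) (hcont : Continuous Φ)
    (hpos : 0 < sInf (Set.range Φ)) (t : ℝ) (ht : 0 < t)
    (x : T1) (a b : ℝ) (hab : a ≤ b) :
    stretchArc (skew α β) Φ (nlowArc (skew α β) Φ t x a b) x a b / sSup (Set.range Φ)
        - sSup (Set.range Φ) / sInf (Set.range Φ)
      ≤ (nhighArc (skew α β) Φ t x a b : ℝ) - (nlowArc (skew α β) Φ t x a b : ℝ) ∧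
    (nhighArc (skew α β) Φ t x a b : ℝ) - (nlowArc (skew α β) Φ t x a b : ℝ)
      ≤ stretchArc (skew α β) Φ (nlowArc (skew α β) Φ t x a b) x a b / sInf (Set.range Φ)
        + sSup (Set.range Φ) / sInf (Set.range Φ) := by
  set lo := sInf (Set.range Φ)
  set hi := sSup (Set.range Φ)
  have hcompact : IsCompact (Set.range Φ) := isCompact_range hcont
  have hlo : ∀ p, lo ≤ Φ p := fun p => csInf_le hcompact.bddBelow ⟨p, rfl⟩
  have hhi : ∀ p, Φ p ≤ hi := fun p => le_csSup hcompact.bddAbove ⟨p, rfl⟩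
  have hlohi : lo ≤ hi := (hlo 0).trans (hhi 0)
  have hhipos : 0 < hi := hpos.trans_le hlohi
  have hupper := stretchArc_nlowArc_le (skew α β) t x hpos hlo hhi ht hab
  have hlower := nhighArc_sub_nlowArc_mul_le (skew α β) t x hpos hlo hhi ht hab
  have hratio : 1 ≤ hi / lo := (one_le_div hpos).mpr hlohi
  constructor
  · have := (div_le_iff₀ hhipos).mpr hupper
    linarith
  · rw [← add_div, le_div_iff₀ hpos]
    exact hlower

/-- Lemma: stretch controls the variation of the hitting number.
`ΔΦ_{n̲}(I)/Φ̄ − Φ̄/Φ̲ ≤ n̄_t(I) − n̲_t(I) ≤ ΔΦ_{n̲}(I)/Φ̲ + Φ̄/Φ̲`. -/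
theorem stmt5 (α β : ℝ) (Φ : T2 → ℝ) (hcont : Continuous Φ)
    (hpos : 0 < sInf (Set.range Φ)) (t : ℝ) (ht : 0 < t)
    (x : T1) (a b : ℝ) (hab : a ≤ b) (hlen : b - a < 1) :
    stretchArc (skew α β) Φ (nlowArc (skew α β) Φ t x a b) x a b / sSup (Set.range Φ)
        - sSup (Set.range Φ) / sInf (Set.range Φ)
      ≤ (nhighArc (skew α β) Φ t x a b : ℝ) - (nlowArc (skew α β) Φ t x a b : ℝ) ∧
    (nhighArc (skew α β) Φ t x a b : ℝ) - (nlowArc (skew α β) Φ t x a b : ℝ)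
      ≤ stretchArc (skew α β) Φ (nlowArc (skew α β) Φ t x a b) x a b / sInf (Set.range Φ)
        + sSup (Set.range Φ) / sInf (Set.range Φ) :=
  stmt5_general α β Φ hcont hpos t ht x a b hab
end
end

section
/- Let f(x,y) = (x+α, y+x+β) be the linear skew-shift of T² with α irrational, and fix m ∈ ℤ, n ∈ ℤ∖{0} and s > 1/2. Then the functional D_{(m,n)} is f-invariant: for every Ψ ∈ W^s(H_{(m,n)}) one has D_{(m,n)}(Ψ∘f) = D_{(m,n)}(Ψ). Consequently, if Φ ∈ W^s(H_{(m,n)}) is a coboundary, i.e. Φ = u∘f − u for some u ∈ W^s(H_{(m,n)}), then D_{(m,n)}(Φ) = 0. -/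
open MeasureTheory Filter

noncomputable section

/-- The character `e_{a,b}(x,y) = exp(2πi(ax+by))` on the two-torus. -/
def eab (a b : ℤ) (p : T2) : ℂ := fourier a p.1 * fourier b p.2

/-- The phase `θ_j = (αm+βn)j + αn·j(j−1)/2`. -/
def theta (α β : ℝ) (m n j : ℤ) : ℝ :=
  (α * m + β * n) * j + α * n * ((j : ℝ) * ((j : ℝ) - 1) / 2)

/-- The invariant distribution `D_{(m,n)}` evaluated on a coefficient sequence:
`D_{(m,n)}(Φ) = ∑_j Φ_j exp(−2πi θ_j)`. -/
def Dmn (α β : ℝ) (m n : ℤ) (c : ℤ → ℂ) : ℂ :=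
  ∑' j : ℤ, c j * Complex.exp (-(2 * Real.pi * Complex.I * (theta α β m n j : ℝ)))

/-- The Sobolev weight `(1+(m+jn)²+n²)^s`. -/
def wt (m n : ℤ) (s : ℝ) (j : ℤ) : ℝ :=
  (1 + ((m + j * n : ℤ) : ℝ) ^ 2 + (n : ℝ) ^ 2) ^ s

/-- The coefficient sequence `c` belongs to `W^s(H_{(m,n)})`. -/
def SobSeq (m n : ℤ) (s : ℝ) (c : ℤ → ℂ) : Prop :=
  Summable fun j : ℤ => wt m n s j * ‖c j‖ ^ 2

/-- The Sobolev norm `‖·‖_s` on `H_{(m,n)}`, computed from coefficients. -/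
def sobNorm (m n : ℤ) (s : ℝ) (c : ℤ → ℂ) : ℝ :=
  Real.sqrt (∑' j : ℤ, wt m n s j * ‖c j‖ ^ 2)

/-- The function `∑_j c_j e_{m+jn,n}` of `H_{(m,n)}` with coefficients `c`. -/
def funOf (m n : ℤ) (c : ℤ → ℂ) : T2 → ℂ := fun p => ∑' j : ℤ, c j * eab (m + j * n) n p

/-
Composition with the skew-shift maps `e_{m+jn,n}` to `e_{m+jn,n}(α, β) · e_{m+(j+1)n,n}`, so on
coefficient sequences it is a shift twisted by a unimodular multiplier. The phases satisfy
`θ_{j+1} - θ_j = α(m+jn) + βn`, which absorbs exactly that multiplier, so `D_{(m,n)}` is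
shift-invariant. For `s > 1/2` the coefficients are absolutely summable (AM-GM against the
summable inverse weights), hence determined by the function: on `y = 0` they are its Fourier
coefficients in `x`. This turns the hypotheses on functions into identities of coefficients.
-/

open Function

lemma injective_add_mul_right (m : ℤ) {n : ℤ} (hn : n ≠ 0) : Injective fun j : ℤ => m + j * n :=
  fun _ _ h => mul_right_cancel₀ hn (add_left_cancel h)

lemma summable_norm_of_summable_mul_sq {ι E : Type*} [SeminormedAddCommGroup E] {w : ι → ℝ}
    {c : ι → E} (hw : ∀ i, 0 < w i) (hwc : Summable fun i => w i * ‖c i‖ ^ 2)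
    (hw_inv : Summable fun i => (w i)⁻¹) : Summable fun i => ‖c i‖ := by
  refine .of_nonneg_of_le (fun i => norm_nonneg _) (fun i => ?_)
    ((hwc.add hw_inv).mul_left (1 / 2))
  -- AM-GM: `‖c‖ ≤ (w ‖c‖² + w⁻¹) / 2`
  have hwi : w i * (w i)⁻¹ = 1 := mul_inv_cancel₀ (hw i).ne'
  nlinarith [sq_nonneg (w i * ‖c i‖ - 1), hw i, inv_pos.2 (hw i)]

lemma summable_wt_inv {m n : ℤ} (hn : n ≠ 0) {s : ℝ} (hs : 1 / 2 < s) :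
    Summable fun j : ℤ => (wt m n s j)⁻¹ := by
  have hinj := injective_add_mul_right m hn
  refine .of_norm_bounded_eventually
    ((Real.summable_abs_int_rpow (b := 2 * s) (by linarith)).comp_injective hinj) ?_
  have hfin : {j : ℤ | m + j * n = 0}.Finite := (Set.finite_singleton 0).preimage hinj.injOn
  filter_upwards [hfin.compl_mem_cofinite] with j hj
  have hpos : (0 : ℝ) < |((m + j * n : ℤ) : ℝ)| := abs_pos.2 (by exact_mod_cast hj)
  have hwt : |((m + j * n : ℤ) : ℝ)| ^ (2 * s) ≤ wt m n s j := by
    rw [Real.rpow_mul hpos.le, Real.rpow_two, sq_abs]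
    exact Real.rpow_le_rpow (sq_nonneg _) (by nlinarith [sq_nonneg (n : ℝ)]) (by linarith)
  rw [Real.norm_of_nonneg (inv_nonneg.2 (by unfold wt; positivity)), comp_apply,
    Real.rpow_neg hpos.le]
  exact inv_anti₀ (by positivity) hwt

lemma SobSeq.summable_norm {m n : ℤ} {s : ℝ} {c : ℤ → ℂ} (h : SobSeq m n s c) (hn : n ≠ 0)
    (hs : 1 / 2 < s) : Summable fun j => ‖c j‖ :=
  summable_norm_of_summable_mul_sq (fun _ => Real.rpow_pos_of_pos (by positivity) s) h
    (summable_wt_inv hn hs)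

lemma summable_mul_of_norm_eq_one {ι : Type*} {c z : ι → ℂ} (hc : Summable fun i => ‖c i‖)
    (hz : ∀ i, ‖z i‖ = 1) : Summable fun i => c i * z i :=
  .of_norm_bounded hc fun i => by rw [norm_mul, hz, mul_one]

lemma norm_fourier_apply {T : ℝ} (n : ℤ) (x : AddCircle T) : ‖fourier n x‖ = 1 :=
  Circle.norm_coe _

lemma fourierCoeff_tsum_mul_fourier {T : ℝ} [Fact (0 < T)] {ι : Type*} [Countable ι]
    {g : ι → ℤ} (hg : Injective g) {c : ι → ℂ} (hc : Summable fun i => ‖c i‖) (i : ι) :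
    fourierCoeff (fun x : AddCircle T => ∑' k, c k * fourier (g k) x) (g i) = c i := by
  set F : ι → AddCircle T → ℂ := fun k x => fourier (-g i) x * (c k * fourier (g k) x)
  have hF_int (k : ι) : Integrable (F k) AddCircle.haarAddCircle :=
    (by fun_prop : Continuous (F k)).integrable_of_hasCompactSupport
      (HasCompactSupport.of_compactSpace _)
  have hF_norm (k : ι) : ∫ x, ‖F k x‖ ∂AddCircle.haarAddCircle = ‖c k‖ := by
    simp only [F, norm_mul, norm_fourier_apply, one_mul, mul_one, integral_const, probReal_univ,
      one_smul]
  calc fourierCoeff (fun x : AddCircle T => ∑' k, c k * fourier (g k) x) (g i)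
      = ∫ x, ∑' k, F k x ∂AddCircle.haarAddCircle := by
        simp only [fourierCoeff, smul_eq_mul, F, tsum_mul_left]
    _ = ∑' k, c k * fourierCoeff (fourier (T := T) (g k)) (g i) := by
        rw [← integral_tsum_of_summable_integral_norm hF_int (by simpa only [hF_norm] using hc)]
        simp only [F, fourierCoeff, smul_eq_mul, mul_left_comm _ (c _), integral_const_mul]
    _ = c i := by
        rw [tsum_eq_single i fun k hk => ?_]
        · simp [fourierCoeff_fourier]
        · simp [fourierCoeff_fourier, hg.ne (Ne.symm hk)]

lemma norm_eab (a b : ℤ) (p : T2) : ‖eab a b p‖ = 1 := by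
  rw [eab, norm_mul, norm_fourier_apply, norm_fourier_apply, one_mul]

lemma norm_exp_neg_two_pi_I_mul (r : ℝ) : ‖Complex.exp (-(2 * Real.pi * Complex.I * r))‖ = 1 := by
  simp [Complex.norm_exp]

lemma funOf_apply_zero (m n : ℤ) (c : ℤ → ℂ) (x : T1) :
    funOf m n c (x, 0) = ∑' j, c j * fourier (m + j * n) x := by
  simp [funOf, eab]

lemma funOf_sub {m n : ℤ} {c d : ℤ → ℂ} (hc : Summable fun j => ‖c j‖)
    (hd : Summable fun j => ‖d j‖) (p : T2) :
    funOf m n (c - d) p = funOf m n c p - funOf m n d p := by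
  simp only [funOf, Pi.sub_apply, sub_mul]
  exact (summable_mul_of_norm_eq_one hc fun _ => norm_eab _ _ _).tsum_sub
    (summable_mul_of_norm_eq_one hd fun _ => norm_eab _ _ _)

lemma Dmn_sub (α β : ℝ) {m n : ℤ} {c d : ℤ → ℂ} (hc : Summable fun j => ‖c j‖)
    (hd : Summable fun j => ‖d j‖) : Dmn α β m n (c - d) = Dmn α β m n c - Dmn α β m n d := by
  simp only [Dmn, Pi.sub_apply, sub_mul]
  exact (summable_mul_of_norm_eq_one hc fun _ => norm_exp_neg_two_pi_I_mul _).tsum_sub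
    (summable_mul_of_norm_eq_one hd fun _ => norm_exp_neg_two_pi_I_mul _)

lemma eq_of_funOf_eq {m n : ℤ} (hn : n ≠ 0) {c d : ℤ → ℂ} (hc : Summable fun j => ‖c j‖)
    (hd : Summable fun j => ‖d j‖) (h : funOf m n c = funOf m n d) : c = d := by
  funext j
  rw [← fourierCoeff_tsum_mul_fourier (T := 1) (injective_add_mul_right m hn) hc j,
    ← fourierCoeff_tsum_mul_fourier (T := 1) (injective_add_mul_right m hn) hd j]
  congr 1
  funext x
  simpa only [funOf_apply_zero] using congrFun h (x, 0)

lemma eab_skew (α β : ℝ) (a b : ℤ) (p : T2) :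
    eab a b (skew α β p) = fourier a (α : T1) * fourier b (β : T1) * eab (a + b) b p := by
  simp only [eab, skew, fourier_apply, smul_add, add_smul, AddCircle.toCircle_add,
    Circle.coe_mul]
  ring

-- By `eab_skew`, composing with `f` shifts `j` by one and twists by `e_{m+jn,n}(α, β)`.
def skewCoeff (α β : ℝ) (m n : ℤ) (c : ℤ → ℂ) (j : ℤ) : ℂ :=
  fourier (m + (j - 1) * n) (α : T1) * fourier n (β : T1) * c (j - 1)

lemma funOf_skew (α β : ℝ) (m n : ℤ) (c : ℤ → ℂ) (p : T2) :
    funOf m n c (skew α β p) = funOf m n (skewCoeff α β m n c) p := by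
  rw [funOf, funOf, ← (Equiv.subRight (1 : ℤ)).tsum_eq]
  congr 1
  funext j
  simp only [Equiv.subRight_apply, skewCoeff, eab_skew]
  ring_nf

lemma summable_norm_skewCoeff (α β : ℝ) (m n : ℤ) {c : ℤ → ℂ} (hc : Summable fun j => ‖c j‖) :
    Summable fun j => ‖skewCoeff α β m n c j‖ := by
  simp only [skewCoeff, norm_mul, norm_fourier_apply, one_mul]
  exact hc.comp_injective (Equiv.subRight (1 : ℤ)).injective

lemma Dmn_skewCoeff (α β : ℝ) (m n : ℤ) (c : ℤ → ℂ) :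
    Dmn α β m n (skewCoeff α β m n c) = Dmn α β m n c := by
  rw [Dmn, ← (Equiv.addRight (1 : ℤ)).tsum_eq, Dmn]
  congr 1
  funext j
  have hθ : theta α β m n (j + 1) = theta α β m n j + (m + j * n) * α + n * β := by
    simp only [theta]; push_cast; ring
  simp only [Equiv.coe_addRight, skewCoeff, add_sub_cancel_right, fourier_coe_apply, hθ]
  rw [mul_comm _ (c j), mul_assoc, mul_assoc, ← Complex.exp_add, ← Complex.exp_add]
  congr 2
  push_cast
  ring

theorem stmt8_general (α β : ℝ) (m n : ℤ) (hn : n ≠ 0)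
    (s : ℝ) (hs : 1 / 2 < s) :
    (∀ Ψc Ψc' : ℤ → ℂ, SobSeq m n s Ψc → SobSeq m n s Ψc' →
      (∀ p : T2, funOf m n Ψc' p = funOf m n Ψc (skew α β p)) →
      Dmn α β m n Ψc' = Dmn α β m n Ψc) ∧
    ∀ Φc uc : ℤ → ℂ, SobSeq m n s Φc → SobSeq m n s uc →
      (∀ p : T2, funOf m n Φc p = funOf m n uc (skew α β p) - funOf m n uc p) →
      Dmn α β m n Φc = 0 := by
  constructor
  · intro Ψc Ψc' hΨ hΨ' hcomp
    have hcoeff : Ψc' = skewCoeff α β m n Ψc :=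
      eq_of_funOf_eq hn (hΨ'.summable_norm hn hs)
        (summable_norm_skewCoeff α β m n (hΨ.summable_norm hn hs))
        (funext fun p => (hcomp p).trans (funOf_skew α β m n Ψc p))
    rw [hcoeff, Dmn_skewCoeff]
  · intro Φc uc hΦ hu hcob
    have hu₁ := hu.summable_norm hn hs
    have hfu₁ := summable_norm_skewCoeff α β m n hu₁
    have hdiff : Summable fun j => ‖(skewCoeff α β m n uc - uc) j‖ :=
      .of_nonneg_of_le (fun _ => norm_nonneg _) (fun _ => norm_sub_le _ _) (hfu₁.add hu₁)
    have hcoeff : Φc = skewCoeff α β m n uc - uc :=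
      eq_of_funOf_eq hn (hΦ.summable_norm hn hs) hdiff
        (funext fun p => by rw [hcob, funOf_sub hfu₁ hu₁, funOf_skew])
    rw [hcoeff, Dmn_sub α β hfu₁ hu₁, Dmn_skewCoeff, sub_self]

/-- `D_{(m,n)}` is `f`-invariant, and vanishes on coboundaries.
For `s > 1/2`: if `Ψ' = Ψ∘f` (as functions in `W^s(H_{(m,n)})`, given by coefficient
sequences), then `D_{(m,n)}(Ψ') = D_{(m,n)}(Ψ)`; consequently if `Φ = u∘f − u` with
`u ∈ W^s(H_{(m,n)})`, then `D_{(m,n)}(Φ) = 0`. -/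
theorem stmt8 (α β : ℝ) (hα : Irrational α) (m n : ℤ) (hn : n ≠ 0)
    (s : ℝ) (hs : 1 / 2 < s) :
    (∀ Ψc Ψc' : ℤ → ℂ, SobSeq m n s Ψc → SobSeq m n s Ψc' →
      (∀ p : T2, funOf m n Ψc' p = funOf m n Ψc (skew α β p)) →
      Dmn α β m n Ψc' = Dmn α β m n Ψc) ∧
    ∀ Φc uc : ℤ → ℂ, SobSeq m n s Φc → SobSeq m n s uc →
      (∀ p : T2, funOf m n Φc p = funOf m n uc (skew α β p) - funOf m n uc p) →
      Dmn α β m n Φc = 0 :=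
  stmt8_general α β m n hn s hs
end
end

section
/- Let X, Y, Z be the 3×3 real matrices X = E_{12}, Y = E_{23}, Z = E_{13} (elementary matrices with a single entry 1 in the indicated position), which satisfy [X,Y] = Z and [X,Z] = [Y,Z] = 0. Let w_x, w_y, w_z ∈ ℝ with w_y ≠ 0 and set W := w_x X + w_y Y + w_z Z. Then for all x, z ∈ ℝ: exp(−Y) · exp(xX + zZ) · exp(W/w_y) = exp( (x + w_x/w_y) X + (z + x + w_z/w_y + w_x/(2 w_y)) Z ), where exp denotes the matrix exponential. -/
open Matrix NormedSpace

noncomputable section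

/-- The Heisenberg basis matrix `X = E₁₂`. -/
def Xm : Matrix (Fin 3) (Fin 3) ℝ := Matrix.single 0 1 1

/-- The Heisenberg basis matrix `Y = E₂₃`. -/
def Ym : Matrix (Fin 3) (Fin 3) ℝ := Matrix.single 1 2 1

/-- The Heisenberg basis matrix `Z = E₁₃`. -/
def Zm : Matrix (Fin 3) (Fin 3) ℝ := Matrix.single 0 2 1

/-! The span of `X, Y, Z` consists of strictly upper triangular matrices, so the exponential series
of `aX + bY + cZ` stops after the quadratic term and gives the unitriangular matrix with entries
`a, b, c + ab/2`. Both sides of the identity are thus products of unitriangular matrices, which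
multiply by the Heisenberg group law, and it remains to compare three entries. -/

theorem exp_eq_sum_range_of_pow_eq_zero (𝕂 : Type*) {𝔸 : Type*} [Field 𝕂] [CharZero 𝕂] [Ring 𝔸]
    [Algebra 𝕂 𝔸] [TopologicalSpace 𝔸] [IsTopologicalRing 𝔸] {x : 𝔸} {k : ℕ} (hx : x ^ k = 0) :
    exp x = ∑ n ∈ Finset.range k, (n.factorial : 𝕂)⁻¹ • x ^ n := by
  rw [exp_eq_tsum 𝕂]
  refine tsum_eq_sum fun n hn => ?_
  rw [pow_eq_zero_of_le (not_lt.mp (Finset.mem_range.not.mp hn)) hx, smul_zero]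

theorem Xm_mul_Ym_sub_Ym_mul_Xm : Xm * Ym - Ym * Xm = Zm := by
  simp [Xm, Ym, Zm]

theorem Xm_mul_Zm_sub_Zm_mul_Xm : Xm * Zm - Zm * Xm = 0 := by
  simp [Xm, Zm]

theorem Ym_mul_Zm_sub_Zm_mul_Ym : Ym * Zm - Zm * Ym = 0 := by
  simp [Ym, Zm]

theorem smul_Xm_add_smul_Ym_add_smul_Zm (a b c : ℝ) :
    a • Xm + b • Ym + c • Zm = !![0, a, c; 0, 0, b; 0, 0, 0] := by
  ext i j
  fin_cases i <;> fin_cases j <;> simp [Xm, Ym, Zm]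

theorem exp_smul_Xm_add_smul_Ym_add_smul_Zm (a b c : ℝ) :
    exp (a • Xm + b • Ym + c • Zm) = !![1, a, c + a * b / 2; 0, 1, b; 0, 0, 1] := by
  set N := a • Xm + b • Ym + c • Zm with hN
  have hN2 : N ^ 2 = !![0, 0, a * b; 0, 0, 0; 0, 0, 0] := by
    rw [hN, smul_Xm_add_smul_Ym_add_smul_Zm, sq, mul_fin_three]; simp
  have hN3 : N ^ 3 = 0 := by
    rw [pow_succ, hN2, hN, smul_Xm_add_smul_Ym_add_smul_Zm]
    ext i j
    fin_cases i <;> fin_cases j <;> simp [mul_apply, Fin.sum_univ_three]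
  rw [exp_eq_sum_range_of_pow_eq_zero ℝ hN3, Finset.sum_range_succ, Finset.sum_range_succ,
    Finset.sum_range_one, hN2, hN, smul_Xm_add_smul_Ym_add_smul_Zm]
  ext i j
  fin_cases i <;> fin_cases j <;> simp [div_eq_inv_mul]

theorem unitriangular_fin_three_mul {R : Type*} [CommRing R] (a b c a' b' c' : R) :
    !![1, a, c; 0, 1, b; 0, 0, 1] * !![1, a', c'; 0, 1, b'; 0, 0, 1]
      = !![1, a + a', c + c' + a * b'; 0, 1, b + b'; 0, 0, 1] := by
  rw [mul_fin_three]
  ext i j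
  fin_cases i <;> fin_cases j <;> simp <;> ring

/-- Baker–Campbell–Hausdorff computation for the return map.
The Heisenberg basis matrices satisfy `[X,Y]=Z`, `[X,Z]=[Y,Z]=0`, and for `w_y ≠ 0`,
`exp(−Y)·exp(xX+zZ)·exp(W/w_y) = exp((x+w_x/w_y)X + (z+x+w_z/w_y+w_x/(2w_y))Z)` where
`W = w_x X + w_y Y + w_z Z`. -/
theorem stmt14 (wx wy wz : ℝ) (hwy : wy ≠ 0) (x z : ℝ) :
    Xm * Ym - Ym * Xm = Zm ∧ Xm * Zm - Zm * Xm = 0 ∧ Ym * Zm - Zm * Ym = 0 ∧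
    exp (-Ym) * exp (x • Xm + z • Zm) * exp ((1 / wy) • (wx • Xm + wy • Ym + wz • Zm))
      = exp ((x + wx / wy) • Xm + (z + x + wz / wy + wx / (2 * wy)) • Zm) := by
  refine ⟨Xm_mul_Ym_sub_Ym_mul_Xm, Xm_mul_Zm_sub_Zm_mul_Xm, Ym_mul_Zm_sub_Zm_mul_Ym, ?_⟩
  have hY : -Ym = (0 : ℝ) • Xm + (-1 : ℝ) • Ym + (0 : ℝ) • Zm := by module
  have hXZ : x • Xm + z • Zm = x • Xm + (0 : ℝ) • Ym + z • Zm := by module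
  have hW : (1 / wy) • (wx • Xm + wy • Ym + wz • Zm)
      = (wx / wy) • Xm + (1 : ℝ) • Ym + (wz / wy) • Zm := by
    simp only [smul_add, smul_smul]; field_simp
  have hR : (x + wx / wy) • Xm + (z + x + wz / wy + wx / (2 * wy)) • Zm =
      (x + wx / wy) • Xm + (0 : ℝ) • Ym + (z + x + wz / wy + wx / (2 * wy)) • Zm := by module
  rw [hY, hXZ, hW, hR]
  simp only [exp_smul_Xm_add_smul_Ym_add_smul_Zm, unitriangular_fin_three_mul,
    EmbeddingLike.apply_eq_iff_eq, vecCons_inj, and_true, true_and]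
  refine ⟨⟨?_, ?_⟩, ?_⟩ <;> ring
end
end

section
/- Let f(x,y) = (x+α, y+x+β) be a linear skew-shift of T², let Φ : T² → ℝ be continuous, positive, and continuously differentiable in the second variable, and fix t > 0, x ∈ T and a closed arc [a,b] ⊆ T. Set n̲ := min_{y∈[a,b]} n_t(x,y) and n̄ := max_{y∈[a,b]} n_t(x,y). If ∂Φ_n/∂y (x,y) < 0 for all y ∈ [a,b] and all integers n with n̲ ≤ n ≤ n̄, then the function y ↦ n_t(x,y) is non-decreasing on [a,b]. -/
open MeasureTheory Filter

noncomputable section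

lemma exists_min_pos (Φ : T2 → ℝ) (hcont : Continuous Φ) (hpos : ∀ p : T2, 0 < Φ p) :
    ∃ m : ℝ, 0 < m ∧ ∀ p : T2, m ≤ Φ p := by
  obtain ⟨p0, -, hp0⟩ := isCompact_univ.exists_isMinOn (s := (Set.univ : Set T2))
    ⟨((0:T1), (0:T1)), trivial⟩ hcont.continuousOn
  exact ⟨Φ p0, hpos p0, fun p => hp0 (Set.mem_univ p)⟩

lemma birkhoff_lb {f : T2 → T2} {Φ : T2 → ℝ} {m : ℝ} (hm : ∀ p : T2, m ≤ Φ p)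
    (n : ℕ) (p : T2) : n * m ≤ birkhoff f Φ n p := by
  calc (n : ℝ) * m = ∑ _k ∈ Finset.range n, m := by simp [mul_comm]
    _ ≤ _ := Finset.sum_le_sum fun k _ => hm _

lemma hitting_set_bdd {f : T2 → T2} {Φ : T2 → ℝ} {m t : ℝ} (hm0 : 0 < m)
    (hm : ∀ p : T2, m ≤ Φ p) (p : T2) :
    BddAbove {n : ℕ | birkhoff f Φ n p < t} := by
  refine ⟨⌈t / m⌉₊, fun n hn => ?_⟩
  have h1 : (n : ℝ) * m < t := lt_of_le_of_lt (birkhoff_lb hm n p) hn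
  have h2 : (n : ℝ) ≤ t / m := le_of_lt ((lt_div_iff₀ hm0).mpr h1)
  exact_mod_cast h2.trans (Nat.le_ceil _)

lemma hitting_mem {f : T2 → T2} {Φ : T2 → ℝ} {m t : ℝ} (hm0 : 0 < m)
    (hm : ∀ p : T2, m ≤ Φ p) (ht : 0 < t) (p : T2) :
    birkhoff f Φ (hitting f Φ t p) p < t := by
  have h0 : (0 : ℕ) ∈ {n : ℕ | birkhoff f Φ n p < t} := by
    simp [birkhoff, ht]
  exact Nat.sSup_mem ⟨0, h0⟩ (hitting_set_bdd hm0 hm p)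

lemma birkhoff_cont {α β : ℝ} {Φ : T2 → ℝ} (hcont : Continuous Φ) (N : ℕ) (x : T1) :
    Continuous fun s : ℝ => birkhoff (skew α β) Φ N (x, (s : T1)) := by
  unfold birkhoff
  refine continuous_finset_sum _ fun k _ => ?_
  have hskew : Continuous (skew α β) := by
    unfold skew
    fun_prop
  have : Continuous ((skew α β)^[k]) := hskew.iterate k
  exact hcont.comp (this.comp ((continuous_const.prodMk continuous_quotient_mk')))

/-- monotonicity of the hitting number on an arc.
If `∂Φ_n/∂y < 0` on `[a,b]` for all `n̲ ≤ n ≤ n̄`, then `y ↦ n_t(x,y)` is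
non-decreasing on `[a,b]`. -/
theorem stmt17 (α β : ℝ) (Φ : T2 → ℝ) (hcont : Continuous Φ) (hpos : ∀ p : T2, 0 < Φ p)
    (hC1 : ∀ x : T1, ContDiff ℝ 1 fun s : ℝ => Φ (x, (s : T1)))
    (t : ℝ) (ht : 0 < t) (x : T1) (a b : ℝ) (hab : a ≤ b) (hlen : b - a < 1)
    (hneg : ∀ y ∈ Set.Icc a b, ∀ N : ℕ,
      nlowArc (skew α β) Φ t x a b ≤ N → N ≤ nhighArc (skew α β) Φ t x a b →
      deriv (fun s : ℝ => birkhoff (skew α β) Φ N (x, (s : T1))) y < 0) :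
    ∀ y₁ ∈ Set.Icc a b, ∀ y₂ ∈ Set.Icc a b, y₁ ≤ y₂ →
      hitting (skew α β) Φ t (x, (y₁ : T1)) ≤ hitting (skew α β) Φ t (x, (y₂ : T1)) := by
  obtain ⟨m, hm0, hm⟩ := exists_min_pos Φ hcont hpos
  intro y₁ hy₁ y₂ hy₂ h12
  rcases eq_or_lt_of_le h12 with rfl | h12
  · exact le_rfl
  set N := hitting (skew α β) Φ t (x, (y₁ : T1)) with hN
  -- N is between nlow and nhigh
  have hNmem : N ∈ ((fun y : ℝ => hitting (skew α β) Φ t (x, (y : T1))) '' Set.Icc a b) :=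
    ⟨y₁, hy₁, rfl⟩
  have hlow : nlowArc (skew α β) Φ t x a b ≤ N := Nat.sInf_le hNmem
  have hbddimg : BddAbove ((fun y : ℝ => hitting (skew α β) Φ t (x, (y : T1))) '' Set.Icc a b) := by
    refine ⟨⌈t / m⌉₊, ?_⟩
    rintro n ⟨y, -, rfl⟩
    obtain ⟨B, hB⟩ := hitting_set_bdd (f := skew α β) (t := t) hm0 hm (x, (y : T1))
    have h0 : (0 : ℕ) ∈ {n : ℕ | birkhoff (skew α β) Φ n (x, (y : T1)) < t} := by
      simp [birkhoff, ht]
    have := Nat.sSup_mem ⟨0, h0⟩ ⟨B, hB⟩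
    have h1 : ((hitting (skew α β) Φ t (x, (y : T1)) : ℕ) : ℝ) * m < t :=
      lt_of_le_of_lt (birkhoff_lb hm _ _) this
    have h2 : ((hitting (skew α β) Φ t (x, (y : T1)) : ℕ) : ℝ) ≤ t / m :=
      le_of_lt ((lt_div_iff₀ hm0).mpr h1)
    exact_mod_cast h2.trans (Nat.le_ceil _)
  have hhigh : N ≤ nhighArc (skew α β) Φ t x a b := le_csSup hbddimg hNmem
  -- birkhoff N is strictly decreasing on [a,b]
  have hanti : StrictAntiOn (fun s : ℝ => birkhoff (skew α β) Φ N (x, (s : T1)))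
      (Set.Icc a b) := by
    refine StrictAntiOn.mono ?_ (le_refl (Set.Icc a b))
    refine strictAntiOn_of_deriv_neg (convex_Icc a b)
      ((birkhoff_cont hcont N x).continuousOn) ?_
    intro y hy
    rw [interior_Icc] at hy
    exact hneg y (Set.mem_Icc_of_Ioo hy) N hlow hhigh
  have hlt : birkhoff (skew α β) Φ N (x, (y₂ : T1)) < t :=
    lt_of_lt_of_le (hanti hy₁ hy₂ h12) (le_of_lt (hitting_mem hm0 hm ht _))
  exact le_csSup (hitting_set_bdd hm0 hm _) hlt
end
end
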